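/- For every fixed real t > 0, the s-channel correction factor of the corrected Veneziano amplitude is subleading in the Regge limit: lim_{s→∞} C(s,t) = 0, where C(a,b) = (ψ(a) − ψ(a+b))³ + 3(ψ'(a) − ψ'(a+b))(ψ(a) − ψ(a+b)) + ψ''(a) − ψ''(a+b). -/

import Mathlib

/-- The digamma function `ψ(x) = Γ'(x)/Γ(x)`. -/
noncomputable def digamma (x : ℝ) : ℝ :=
  deriv Real.Gamma x / Real.Gamma x

/-- `C(a,b) = (ψ(a)-ψ(a+b))³ + 3(ψ'(a)-ψ'(a+b))(ψ(a)-ψ(a+b)) + ψ''(a)-ψ''(a+b)`. -/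
noncomputable def Cfun (a b : ℝ) : ℝ :=
  (digamma a - digamma (a + b)) ^ 3
    + 3 * (deriv digamma a - deriv digamma (a + b)) * (digamma a - digamma (a + b))
    + deriv (deriv digamma) a - deriv (deriv digamma) (a + b)

/-!
Convexity of `log Γ` together with `ψ(x + 1) = ψ(x) + 1/x` squeezes `ψ(x)` between `log (x - 1)`
and `log x`, so `ψ(s) - ψ(s + t) → 0`. The derivatives of Gauss' approximants
`log n - ∑_{m < n} (x + m)⁻¹ → ψ(x)` converge locally uniformly, which gives `ψ' = ζ(2, ·)` and
then `ψ'' = -2 ζ(3, ·)`; by dominated convergence `ζ(k, s) → 0` as `s → ∞` for `k ≥ 2`. Hence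
every term of `C(s, t)` tends to `0`.
-/

open Real Filter Topology Set

lemma tendsto_sub_comp_add_const {f : ℝ → ℝ} (hf : Tendsto f atTop (𝓝 0)) (t : ℝ) :
    Tendsto (fun s => f s - f (s + t)) atTop (𝓝 0) := by
  simpa using hf.sub (hf.comp (tendsto_atTop_add_const_right _ t tendsto_id))

section Digamma

lemma differentiableAt_Gamma_of_pos {x : ℝ} (hx : 0 < x) : DifferentiableAt ℝ Gamma x :=
  differentiableAt_Gamma fun m => ((neg_nonpos.mpr m.cast_nonneg).trans_lt hx).ne'

lemma digamma_eq_deriv_log_Gamma {x : ℝ} (hx : 0 < x) : digamma x = deriv (log ∘ Gamma) x := by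
  rw [Function.comp_def, deriv.log (differentiableAt_Gamma_of_pos hx) (Gamma_pos_of_pos hx).ne',
    digamma]

lemma log_Gamma_add_one {x : ℝ} (hx : 0 < x) :
    (log ∘ Gamma) (x + 1) = (log ∘ Gamma) x + log x := by
  simp only [Function.comp_apply, Gamma_add_one hx.ne',
    log_mul hx.ne' (Gamma_pos_of_pos hx).ne', add_comm]

lemma digamma_add_one {x : ℝ} (hx : 0 < x) : digamma (x + 1) = digamma x + x⁻¹ := by
  have hdiff : DifferentiableAt ℝ (log ∘ Gamma) x :=
    (differentiableAt_Gamma_of_pos hx).log (Gamma_pos_of_pos hx).ne'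
  rw [digamma_eq_deriv_log_Gamma (by positivity), digamma_eq_deriv_log_Gamma hx, ← deriv_log,
    ← deriv_comp_add_const, ← deriv_add hdiff (differentiableAt_log hx.ne')]
  refine EventuallyEq.deriv_eq ?_
  filter_upwards [eventually_gt_nhds hx] using fun y => log_Gamma_add_one

lemma digamma_le_log {x : ℝ} (hx : 0 < x) : digamma x ≤ log x := by
  have hslope := convexOn_log_Gamma.deriv_le_slope (mem_Ioi.mpr hx)
    (mem_Ioi.mpr (by positivity : 0 < x + 1)) (lt_add_one x)
    ((differentiableAt_Gamma_of_pos hx).log (Gamma_pos_of_pos hx).ne')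
  rwa [slope_def_field, log_Gamma_add_one hx, add_sub_cancel_left, add_sub_cancel_left, div_one,
    ← digamma_eq_deriv_log_Gamma hx] at hslope

lemma log_sub_one_le_digamma {x : ℝ} (hx : 1 < x) : log (x - 1) ≤ digamma x := by
  have hx₀ : 0 < x - 1 := sub_pos.mpr hx
  have hslope := convexOn_log_Gamma.slope_le_deriv (mem_Ioi.mpr hx₀)
    (mem_Ioi.mpr (by linarith : 0 < x)) (sub_one_lt x)
    ((differentiableAt_Gamma_of_pos (by linarith)).log (Gamma_pos_of_pos (by linarith)).ne')
  rwa [slope_def_field, ← digamma_eq_deriv_log_Gamma (by linarith), sub_sub_cancel, div_one,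
    ← sub_add_cancel x 1, log_Gamma_add_one hx₀, sub_add_cancel, add_sub_cancel_left] at hslope

lemma tendsto_digamma_sub_log : Tendsto (fun x => digamma x - log x) atTop (𝓝 0) := by
  have hlower : Tendsto (fun x => log (x - 1) - log x) atTop (𝓝 0) := by
    simpa only [← sub_eq_add_neg] using tendsto_log_comp_add_sub_log (-1)
  refine tendsto_of_tendsto_of_tendsto_of_le_of_le' hlower tendsto_const_nhds ?_ ?_
  · filter_upwards [eventually_gt_atTop 1] with x hx
    linarith [log_sub_one_le_digamma hx]
  · filter_upwards [eventually_gt_atTop 0] with x hx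
    linarith [digamma_le_log hx]

lemma digamma_add_nat {x : ℝ} (hx : 0 < x) (n : ℕ) :
    digamma (x + n) = digamma x + ∑ m ∈ Finset.range n, (x + m)⁻¹ := by
  induction n with
  | zero => simp
  | succ n ih =>
    rw [Nat.cast_succ, ← add_assoc, digamma_add_one (by positivity), ih, Finset.sum_range_succ,
      add_assoc]

lemma tendsto_log_sub_sum_inv {x : ℝ} (hx : 0 < x) :
    Tendsto (fun n : ℕ => log n - ∑ m ∈ Finset.range n, (x + m)⁻¹) atTop
      (𝓝 (digamma x)) := by
  have hshift : Tendsto (fun n : ℕ => x + n) atTop atTop :=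
    tendsto_atTop_add_const_left _ x tendsto_natCast_atTop_atTop
  have hlim := ((tendsto_digamma_sub_log.comp hshift).add
    ((tendsto_log_comp_add_sub_log x).comp tendsto_natCast_atTop_atTop)).const_sub (digamma x)
  rw [add_zero, sub_zero] at hlim
  refine hlim.congr fun n => ?_
  simp only [Function.comp_apply, digamma_add_nat hx, add_comm (n : ℝ) x]
  ring

end Digamma

section HurwitzSeries

/-- The Hurwitz zeta function `ζ(k, x)` at integer `k`; on `x > 0` the polygamma functions are
`ψ⁽ʲ⁾ = (-1)^(j+1) j! ζ(j + 1, ·)`. -/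
noncomputable def hurwitzSeries (k : ℕ) (x : ℝ) : ℝ := ∑' m : ℕ, ((x + m) ^ k)⁻¹

lemma summable_inv_add_nat_pow {k : ℕ} (hk : 2 ≤ k) {x : ℝ} (hx : 0 < x) :
    Summable fun m : ℕ => ((x + m) ^ k)⁻¹ := by
  have h := (Real.summable_one_div_nat_add_rpow x k).mpr (by exact_mod_cast hk)
  refine h.congr fun m => ?_
  rw [abs_of_pos (by positivity), rpow_natCast, one_div, add_comm]

lemma hasDerivAt_inv_add_pow (k : ℕ) {y c : ℝ} (h : 0 < y + c) :
    HasDerivAt (fun z => ((z + c) ^ k)⁻¹) (-k * ((y + c) ^ (k + 1))⁻¹) y := by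
  rcases k with _ | k
  · simpa using hasDerivAt_const y (1 : ℝ)
  have h' := (((hasDerivAt_id y).add_const c).pow (k + 1)).inv (pow_pos h (k + 1)).ne'
  refine h'.congr_deriv ?_
  simp only [Pi.pow_apply, id, Nat.add_sub_cancel, mul_one]
  field_simp
  ring

lemma tendsto_hurwitzSeries_atTop {k : ℕ} (hk : 2 ≤ k) :
    Tendsto (hurwitzSeries k) atTop (𝓝 0) := by
  have hterm (m : ℕ) : Tendsto (fun x : ℝ => ((x + m) ^ k)⁻¹) atTop (𝓝 0) :=
    tendsto_inv_atTop_zero.comp <| (tendsto_pow_atTop (by omega)).comp <|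
      tendsto_atTop_add_const_right _ _ tendsto_id
  have hlim := tendsto_tsum_of_dominated_convergence (summable_inv_add_nat_pow hk one_pos) hterm ?_
  · unfold hurwitzSeries
    simpa only [tsum_zero] using hlim
  filter_upwards [eventually_ge_atTop 1] with x hx m
  rw [Real.norm_of_nonneg (by positivity)]
  gcongr

lemma hasDerivAt_hurwitzSeries {k : ℕ} (hk : 2 ≤ k) {x : ℝ} (hx : 0 < x) :
    HasDerivAt (hurwitzSeries k) (-k * hurwitzSeries (k + 1) x) x := by
  have hδ : 0 < x / 2 := by positivity
  have hx' : x ∈ Ioi (x / 2) := half_lt_self hx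
  have hbound (m : ℕ) (y : ℝ) (hy : y ∈ Ioi (x / 2)) :
      ‖-k * ((y + m) ^ (k + 1))⁻¹‖ ≤ k * ((x / 2 + m) ^ (k + 1))⁻¹ := by
    have hy₀ : 0 < y := hδ.trans hy
    rw [norm_mul, norm_neg, Real.norm_natCast, Real.norm_of_nonneg (by positivity)]
    gcongr
    exact le_of_lt hy
  have hderiv := hasDerivAt_tsum_of_isPreconnected
    ((summable_inv_add_nat_pow (by omega) hδ).mul_left (k : ℝ)) isOpen_Ioi isPreconnected_Ioi
    (fun m y hy => hasDerivAt_inv_add_pow k (by have := hδ.trans hy; positivity)) hbound hx'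
    (summable_inv_add_nat_pow hk hx) hx'
  rwa [tsum_mul_left] at hderiv

end HurwitzSeries

section Polygamma

lemma hasDerivAt_digamma {x : ℝ} (hx : 0 < x) : HasDerivAt digamma (hurwitzSeries 2 x) x := by
  have hδ : 0 < x / 2 := by positivity
  refine hasDerivAt_of_tendstoUniformlyOn (l := atTop)
    (f := fun (n : ℕ) (y : ℝ) => log n - ∑ m ∈ Finset.range n, (y + m)⁻¹)
    (f' := fun n y => ∑ m ∈ Finset.range n, ((y + m) ^ 2)⁻¹) isOpen_Ioi ?_ ?_
    (fun y hy => tendsto_log_sub_sum_inv (hδ.trans hy)) (mem_Ioi.mpr (half_lt_self hx))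
  · refine tendstoUniformlyOn_tsum_nat (summable_inv_add_nat_pow le_rfl hδ) fun m y hy => ?_
    have hy₀ : 0 < y := hδ.trans hy
    rw [Real.norm_of_nonneg (by positivity)]
    gcongr
    exact le_of_lt hy
  · refine Eventually.of_forall fun n y hy => ?_
    have hy₀ : 0 < y := hδ.trans hy
    have hsum := HasDerivAt.fun_sum (u := Finset.range n)
      fun m _ => hasDerivAt_inv_add_pow 1 (c := (m : ℝ)) (by positivity : 0 < y + m)
    simpa using hsum.const_sub (log n)

lemma deriv_digamma {x : ℝ} (hx : 0 < x) : deriv digamma x = hurwitzSeries 2 x :=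
  (hasDerivAt_digamma hx).deriv

lemma deriv_deriv_digamma {x : ℝ} (hx : 0 < x) :
    deriv (deriv digamma) x = -2 * hurwitzSeries 3 x := by
  have heq : deriv digamma =ᶠ[𝓝 x] hurwitzSeries 2 := by
    filter_upwards [eventually_gt_nhds hx] using fun y => deriv_digamma
  rw [heq.deriv_eq, (hasDerivAt_hurwitzSeries le_rfl hx).deriv]
  norm_num

lemma tendsto_digamma_sub_digamma_add (t : ℝ) :
    Tendsto (fun s => digamma s - digamma (s + t)) atTop (𝓝 0) := by
  have hlim := (tendsto_sub_comp_add_const tendsto_digamma_sub_log t).sub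
    (tendsto_log_comp_add_sub_log t)
  rw [sub_zero] at hlim
  exact hlim.congr fun s => by ring

end Polygamma

theorem Cfun_s_channel_regge_general (t : ℝ) :
    Filter.Tendsto (fun s : ℝ => Cfun s t) Filter.atTop (nhds 0) := by
  have hψ := tendsto_digamma_sub_digamma_add t
  have hψ' := tendsto_sub_comp_add_const (tendsto_hurwitzSeries_atTop le_rfl) t
  have hψ'' := tendsto_sub_comp_add_const (tendsto_hurwitzSeries_atTop (by norm_num : 2 ≤ 3)) t
  have hlim := ((hψ.pow 3).add ((hψ'.const_mul 3).mul hψ)).add (hψ''.const_mul (-2))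
  rw [show (0 : ℝ) ^ 3 + 3 * 0 * 0 + -2 * 0 = 0 by norm_num] at hlim
  refine hlim.congr' ?_
  filter_upwards [eventually_gt_atTop 0, eventually_gt_atTop (-t)] with s hs hst
  have hst : 0 < s + t := neg_lt_iff_pos_add.mp hst
  simp only [Cfun, deriv_digamma hs, deriv_digamma hst, deriv_deriv_digamma hs,
    deriv_deriv_digamma hst]
  ring

/-- For fixed `t > 0`, the s-channel correction factor is subleading:
`lim_{s→∞} C(s,t) = 0`. -/
theorem Cfun_s_channel_regge (t : ℝ) (ht : 0 < t) :
    Filter.Tendsto (fun s : ℝ => Cfun s t) Filter.atTop (nhds 0) :=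
  Cfun_s_channel_regge_general t
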